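/- arXiv:1212.2312 — 4 statements merged into one kernel-verified Lean document; each statement's English description precedes it below -/
import Mathlib

section
/- For every integer M ≥ 1 and every p ∈ (0, 2π), the principal value integral ∫₀^{2π} e^{iMq}/(e^{ip} − e^{iq}) dq equals −π e^{i(M−1)p}. -/
/-!
Write `D(q) = e^{ip} - e^{iq}`. From `e^{i(M+1)q} = e^{ip} e^{iMq} - e^{iMq} D(q)` the kernels satisfy
`e^{i(M+1)q} / D = e^{ip} (e^{iMq} / D) - e^{iMq}`, and the truncated integrals of the continuous term
`e^{iMq}` tend to `∫₀^{2π} e^{iMq} dq`, which is `2π` for `M = 0` and `0` otherwise. This reduces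
everything to `M = 0`. There, with `θ = (q - p)/2`, one has `1/D = e^{-ip} (1 + i cot θ)/2`, so
`e^{-ip} (q/2 + i log |sin θ|)` is a primitive of `1/D` away from `p`; the logarithms cancel
between the two endpoints next to `p` and between `0` and `2π`, and the truncated integral is exactly
`e^{-ip} (π - ε)`.
-/

open Real Filter Topology Set intervalIntegral
open Complex (I)

noncomputable def pvApprox (f : ℝ → ℂ) (p ε : ℝ) : ℂ :=
  (∫ q in (0 : ℝ)..(p - ε), f q) + ∫ q in (p + ε)..(2 * π), f q

def pvDomain (p ε : ℝ) : Set ℝ := uIcc 0 (p - ε) ∪ uIcc (p + ε) (2 * π)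

noncomputable def pvKernel (M : ℤ) (p q : ℝ) : ℂ :=
  Complex.exp (I * M * q) / (Complex.exp (I * p) - Complex.exp (I * q))

lemma sin_half_sub_ne_zero_of_mem_pvDomain {p ε q : ℝ} (hp : p ∈ Ioo 0 (2 * π))
    (hε : ε ∈ Ioo 0 (2 * π)) (hq : q ∈ pvDomain p ε) : Real.sin ((q - p) / 2) ≠ 0 := by
  obtain ⟨hp0, hp1⟩ := hp
  obtain ⟨hε0, hε1⟩ := hε
  have hθ : -π < (q - p) / 2 ∧ (q - p) / 2 < π ∧ (q - p) / 2 ≠ 0 := by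
    rcases hq with ⟨h0, h1⟩ | ⟨h0, h1⟩ <;>
    · simp only [min_le_iff, le_max_iff] at h0 h1
      refine ⟨?_, ?_, ?_⟩ <;> grind
  exact fun h => hθ.2.2 ((Real.sin_eq_zero_iff_of_lt_of_lt hθ.1 hθ.2.1).1 h)

lemma exp_I_sub_exp_I_mul_eq_one {p q : ℝ} (hs : Real.sin ((q - p) / 2) ≠ 0) :
    (Complex.exp (I * p) - Complex.exp (I * q)) * (Complex.exp (-(I * p)) *
      (1 / 2 + I * (Real.cos ((q - p) / 2) / (2 * Real.sin ((q - p) / 2)) : ℝ))) = 1 := by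
  set θ := (q - p) / 2
  have hq : Complex.exp (I * q) = Complex.exp (I * p) * Complex.exp (θ * I) ^ 2 := by
    rw [sq, ← Complex.exp_add, ← Complex.exp_add]
    congr 1
    simp only [θ]; push_cast; ring
  have hp : Complex.exp (I * p) * Complex.exp (-(I * p)) = 1 := by
    rw [← Complex.exp_add, add_neg_cancel, Complex.exp_zero]
  have hs' : (Real.sin θ : ℂ) ≠ 0 := by exact_mod_cast hs
  have hsc : (Real.sin θ : ℂ) ^ 2 + (Real.cos θ : ℂ) ^ 2 = 1 := by
    exact_mod_cast Real.sin_sq_add_cos_sq θ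
  rw [hq, Complex.exp_mul_I, ← Complex.ofReal_cos, ← Complex.ofReal_sin,
    show ∀ E E' X Y : ℂ, (E - E * X) * (E' * Y) = E * E' * ((1 - X) * Y) by intros; ring, hp,
    one_mul, Complex.ofReal_div, Complex.ofReal_mul, Complex.ofReal_ofNat]
  generalize (Real.sin θ : ℂ) = s at *
  generalize (Real.cos θ : ℂ) = c at *
  field_simp
  linear_combination (s - c * I) * hsc - (s ^ 3 + 2 * c ^ 2 * s + s ^ 2 * c * I) * Complex.I_sq

lemma exp_I_sub_exp_I_ne_zero {p q : ℝ} (hs : Real.sin ((q - p) / 2) ≠ 0) :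
    Complex.exp (I * p) - Complex.exp (I * q) ≠ 0 :=
  left_ne_zero_of_mul_eq_one (exp_I_sub_exp_I_mul_eq_one hs)

/-- `Real.log` is `log |·|`, so this is a primitive on both sides of `p`. -/
noncomputable def pvPrimitive (p x : ℝ) : ℂ :=
  Complex.exp (-(I * p)) * ((x / 2 : ℝ) + I * (Real.log (Real.sin ((x - p) / 2)) : ℝ))

lemma hasDerivAt_pvPrimitive {p q : ℝ} (hs : Real.sin ((q - p) / 2) ≠ 0) :
    HasDerivAt (pvPrimitive p) (1 / (Complex.exp (I * p) - Complex.exp (I * q))) q := by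
  have hθ : HasDerivAt (fun x : ℝ => (x - p) / 2) (1 / 2) q :=
    ((hasDerivAt_id q).sub_const p).div_const 2
  have hlog := (hθ.sin.log hs).ofReal_comp
  have hhalf := ((hasDerivAt_id q).div_const 2).ofReal_comp
  refine ((hhalf.add (hlog.const_mul I)).const_mul (Complex.exp (-(I * p)))).congr_deriv ?_
  rw [← eq_one_div_of_mul_eq_one_right (exp_I_sub_exp_I_mul_eq_one hs)]
  push_cast
  ring

lemma pvApprox_one_div {p ε : ℝ} (hp : p ∈ Ioo 0 (2 * π)) (hε : ε ∈ Ioo 0 (2 * π)) :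
    pvApprox (fun q => 1 / (Complex.exp (I * p) - Complex.exp (I * q))) p ε =
      Complex.exp (-(I * p)) * (π - ε) := by
  have hs : ∀ q ∈ pvDomain p ε, Real.sin ((q - p) / 2) ≠ 0 := fun q hq =>
    sin_half_sub_ne_zero_of_mem_pvDomain hp hε hq
  have hcont : ContinuousOn (fun q : ℝ => 1 / (Complex.exp (I * p) - Complex.exp (I * q)))
      (pvDomain p ε) :=
    continuousOn_const.div (by fun_prop) fun q hq => exp_I_sub_exp_I_ne_zero (hs q hq)
  unfold pvApprox
  rw [integral_eq_sub_of_hasDerivAt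
      (fun q hq => hasDerivAt_pvPrimitive (hs q (Or.inl hq)))
      ((hcont.mono subset_union_left).intervalIntegrable),
    integral_eq_sub_of_hasDerivAt
      (fun q hq => hasDerivAt_pvPrimitive (hs q (Or.inr hq)))
      ((hcont.mono subset_union_right).intervalIntegrable)]
  simp only [pvPrimitive]
  rw [show (p - ε - p) / 2 = -(ε / 2) by ring, show (0 - p) / 2 = -(p / 2) by ring,
    show (2 * π - p) / 2 = π - p / 2 by ring, show (p + ε - p) / 2 = ε / 2 by ring,
    Real.sin_neg, Real.sin_neg, Real.log_neg_eq_log, Real.log_neg_eq_log, Real.sin_pi_sub]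
  push_cast
  ring

lemma continuous_pvApprox {g : ℝ → ℂ} (hg : Continuous g) (p : ℝ) :
    Continuous (pvApprox g p) := by
  have hprim := continuous_primitive (μ := MeasureTheory.volume) hg.intervalIntegrable
  have h : pvApprox g p =
      fun ε => (∫ q in (0 : ℝ)..(p - ε), g q) - ∫ q in (2 * π)..(p + ε), g q := by
    funext ε
    rw [pvApprox, integral_symm (p + ε), sub_neg_eq_add]
  rw [h]
  exact ((hprim 0).comp (continuous_sub_left p)).sub ((hprim _).comp (continuous_const_add p))

lemma tendsto_pvApprox_of_continuous {g : ℝ → ℂ} (hg : Continuous g) (p : ℝ) :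
    Tendsto (pvApprox g p) (𝓝[>] 0) (𝓝 (∫ q in (0 : ℝ)..(2 * π), g q)) := by
  have h := (continuous_pvApprox hg p).tendsto 0
  rw [pvApprox, sub_zero, add_zero,
    integral_add_adjacent_intervals (hg.intervalIntegrable _ _) (hg.intervalIntegrable _ _)] at h
  exact h.mono_left nhdsWithin_le_nhds

lemma integral_exp_I_int_mul {M : ℤ} (hM : M ≠ 0) :
    ∫ q in (0 : ℝ)..(2 * π), Complex.exp (I * M * q) = 0 := by
  have hIM : I * M ≠ 0 := mul_ne_zero Complex.I_ne_zero (Int.cast_ne_zero.mpr hM)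
  rw [integral_exp_mul_complex hIM]
  have : I * M * ((2 * π : ℝ) : ℂ) = M * (2 * π * I) := by push_cast; ring
  rw [this, Complex.exp_int_mul_two_pi_mul_I]
  simp

lemma pvApprox_eq_const_mul_sub {f g h : ℝ → ℂ} {p ε : ℝ} (c : ℂ)
    (hg : ContinuousOn g (pvDomain p ε)) (hh : ContinuousOn h (pvDomain p ε))
    (hf : EqOn f (fun q => c * g q - h q) (pvDomain p ε)) :
    pvApprox f p ε = c * pvApprox g p ε - pvApprox h p ε := by
  have piece : ∀ a b, uIcc a b ⊆ pvDomain p ε →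
      ∫ q in a..b, f q = c * (∫ q in a..b, g q) - ∫ q in a..b, h q := fun a b hab => by
    rw [integral_congr (hf.mono hab), integral_sub
      (((hg.mono hab).intervalIntegrable).const_mul c) (hh.mono hab).intervalIntegrable,
      integral_const_mul]
  rw [pvApprox, pvApprox, pvApprox, piece _ _ subset_union_left, piece _ _ subset_union_right]
  ring

lemma pvKernel_add_one (M : ℤ) {p q : ℝ} (hD : Complex.exp (I * p) - Complex.exp (I * q) ≠ 0) :
    pvKernel (M + 1) p q = Complex.exp (I * p) * pvKernel M p q - Complex.exp (I * M * q) := by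
  rw [pvKernel, pvKernel, Int.cast_add, Int.cast_one,
    show I * (M + 1) * q = I * M * q + I * q by ring, Complex.exp_add]
  field_simp
  ring

lemma tendsto_pvApprox_pvKernel_add_one {M : ℤ} {p : ℝ} (hp : p ∈ Ioo 0 (2 * π)) {L : ℂ}
    (h : Tendsto (pvApprox (pvKernel M p) p) (𝓝[>] 0) (𝓝 L)) :
    Tendsto (pvApprox (pvKernel (M + 1) p) p) (𝓝[>] 0)
      (𝓝 (Complex.exp (I * p) * L - ∫ q in (0 : ℝ)..(2 * π), Complex.exp (I * M * q))) := by
  refine ((h.const_mul _).sub (tendsto_pvApprox_of_continuous (by fun_prop) p)).congr' ?_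
  filter_upwards [Ioo_mem_nhdsGT two_pi_pos] with ε hε
  have hD : ∀ q ∈ pvDomain p ε, Complex.exp (I * p) - Complex.exp (I * q) ≠ 0 := fun q hq =>
    exp_I_sub_exp_I_ne_zero (sin_half_sub_ne_zero_of_mem_pvDomain hp hε hq)
  exact (pvApprox_eq_const_mul_sub _ ((by fun_prop : Continuous _).continuousOn.div
    (by fun_prop) hD) (by fun_prop) fun q hq => pvKernel_add_one M (hD q hq)).symm

lemma tendsto_pvApprox_pvKernel_zero {p : ℝ} (hp : p ∈ Ioo 0 (2 * π)) :
    Tendsto (pvApprox (pvKernel 0 p) p) (𝓝[>] 0) (𝓝 (Complex.exp (-(I * p)) * π)) := by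
  have hlim : Tendsto (fun ε : ℝ => Complex.exp (-(I * p)) * (π - ε)) (𝓝[>] 0)
      (𝓝 (Complex.exp (-(I * p)) * π)) := by
    have h := (by fun_prop : Continuous fun ε : ℝ => Complex.exp (-(I * p)) * (π - ε)).tendsto 0
    simpa using h.mono_left nhdsWithin_le_nhds
  refine hlim.congr' ?_
  filter_upwards [Ioo_mem_nhdsGT two_pi_pos] with ε hε
  rw [← pvApprox_one_div hp hε]
  congr 1
  funext q
  simp [pvKernel]

lemma tendsto_pvApprox_pvKernel_one {p : ℝ} (hp : p ∈ Ioo 0 (2 * π)) :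
    Tendsto (pvApprox (pvKernel 1 p) p) (𝓝[>] 0) (𝓝 (-π)) := by
  convert tendsto_pvApprox_pvKernel_add_one hp (tendsto_pvApprox_pvKernel_zero hp) using 2
  · rw [zero_add]
  rw [← mul_assoc, ← Complex.exp_add, add_neg_cancel, Complex.exp_zero, one_mul]
  simp only [Int.cast_zero, mul_zero, zero_mul, Complex.exp_zero, integral_const, sub_zero,
    Complex.real_smul, mul_one]
  push_cast
  ring

/-- For integer M ≥ 1 and p ∈ (0, 2π), the principal value integral
∫₀^{2π} e^{iMq}/(e^{ip} − e^{iq}) dq equals −π e^{i(M−1)p}. -/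
theorem pv_integral_pos_M (M : ℤ) (hM : 1 ≤ M) (p : ℝ) (hp : p ∈ Set.Ioo 0 (2 * π)) :
    Tendsto (fun ε : ℝ =>
        (∫ q in (0:ℝ)..(p - ε),
          Complex.exp (Complex.I * M * q) /
            (Complex.exp (Complex.I * p) - Complex.exp (Complex.I * q))) +
        ∫ q in (p + ε)..(2 * π),
          Complex.exp (Complex.I * M * q) /
            (Complex.exp (Complex.I * p) - Complex.exp (Complex.I * q)))
      (nhdsWithin 0 (Set.Ioi 0))
      (nhds (-(π : ℂ) * Complex.exp (Complex.I * (M - 1) * p))) := by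
  change Tendsto (pvApprox (pvKernel M p) p) _ _
  induction M, hM using Int.leInduction with
  | base => simpa using tendsto_pvApprox_pvKernel_one hp
  | succ M hM ih =>
    convert tendsto_pvApprox_pvKernel_add_one hp ih using 2
    rw [integral_exp_I_int_mul (by omega), sub_zero, mul_left_comm, ← Complex.exp_add]
    push_cast
    ring_nf
end

section
/- For every integer M < 1 and every p ∈ (0, 2π), the principal value integral ∫₀^{2π} e^{iMq}/(e^{ip} − e^{iq}) dq equals +π e^{i(M−1)p}. -/
/-!
Write `M = -N` and `θ = q - p`. The integrand is `e^{i(M-1)p} e^{-iNθ} / (1 - e^{iθ})`, and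
`e^{-iNθ} / (1 - e^{iθ}) = 1/2 + (i/2) cot (θ/2) + ∑_{k=1}^N e^{-ikθ}` has the primitive
`θ/2 + i log |sin (θ/2)| + ∑_{k=1}^N (i/k) e^{-ikθ}`. Its logarithmic part is even in `θ`,
so it cancels in the symmetric excision around `θ = 0`, and the primitive gains exactly `π`
over a period.
-/

open Real Filter Topology Set

theorem tendsto_integral_add_integral_of_hasDerivAt {E : Type*} [NormedAddCommGroup E]
    [NormedSpace ℝ E] [CompleteSpace E] {f F : ℝ → E} {a b p : ℝ}
    (hap : a < p) (hpb : p < b)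
    (hF : ∀ x ∈ Icc a b \ {p}, HasDerivAt F (f x) x) (hf : ContinuousOn f (Icc a b \ {p}))
    (hsym : Tendsto (fun ε ↦ F (p - ε) - F (p + ε)) (𝓝[>] 0) (𝓝 0)) :
    Tendsto (fun ε ↦ (∫ x in a..p - ε, f x) + ∫ x in p + ε..b, f x) (𝓝[>] 0)
      (𝓝 (F b - F a)) := by
  have ftc : ∀ c d, a ≤ c → c ≤ d → d ≤ b → p ∉ Icc c d →
      ∫ x in c..d, f x = F d - F c :=
    fun c d hac hcd hdb hp ↦
      have hsub : Icc c d ⊆ Icc a b \ {p} := fun x hx ↦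
        ⟨⟨hac.trans hx.1, hx.2.trans hdb⟩, fun h ↦ hp (h ▸ hx)⟩
      intervalIntegral.integral_eq_sub_of_hasDerivAt
        (fun x hx ↦ hF x (hsub (uIcc_of_le hcd ▸ hx)))
        ((hf.mono hsub).intervalIntegrable_of_Icc hcd)
  have hsmall : ∀ᶠ ε in 𝓝[>] (0 : ℝ), (∫ x in a..p - ε, f x) + ∫ x in p + ε..b, f x
      = F b - F a + (F (p - ε) - F (p + ε)) := by
    filter_upwards [Ioo_mem_nhdsGT (lt_min (sub_pos.2 hap) (sub_pos.2 hpb))]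
      with ε ⟨hε, hεab⟩
    obtain ⟨hεa, hεb⟩ := lt_min_iff.1 hεab
    rw [ftc a (p - ε) le_rfl (by linarith) (by linarith) fun h ↦ by linarith [h.2],
      ftc (p + ε) b (by linarith) (by linarith) le_rfl fun h ↦ by linarith [h.1]]
    abel
  simpa using (tendsto_const_nhds.add hsym).congr' (hsmall.mono fun _ h ↦ h.symm)

namespace Complex

theorem one_sub_exp_mul_I (θ : ℝ) :
    1 - exp (θ * I) = -2 * I * Real.sin (θ / 2) * exp (↑(θ / 2) * I) := by
  have hsq : exp (θ * I) = exp (↑(θ / 2) * I) ^ 2 := by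
    rw [← exp_nat_mul]; push_cast; ring_nf
  have hcs : (Real.cos (θ / 2) : ℂ) ^ 2 + (Real.sin (θ / 2) : ℂ) ^ 2 = 1 := by
    exact_mod_cast Real.cos_sq_add_sin_sq (θ / 2)
  rw [hsq, exp_mul_I, ← ofReal_cos, ← ofReal_sin]
  linear_combination -hcs + (Real.sin (θ / 2) : ℂ) ^ 2 * I_sq

theorem one_sub_exp_mul_I_ne_zero {θ : ℝ} (hθ : Real.sin (θ / 2) ≠ 0) :
    1 - exp (θ * I) ≠ 0 := by
  rw [one_sub_exp_mul_I]
  exact mul_ne_zero (mul_ne_zero (by simp) (ofReal_ne_zero.2 hθ)) (exp_ne_zero _)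

theorem inv_one_sub_exp_mul_I {θ : ℝ} (hθ : Real.sin (θ / 2) ≠ 0) :
    (1 - exp (θ * I))⁻¹ = 1 / 2 + I * (Real.cos (θ / 2) / (2 * Real.sin (θ / 2))) := by
  have hs : (Real.sin (θ / 2) : ℂ) ≠ 0 := ofReal_ne_zero.2 hθ
  have hcs : (Real.cos (θ / 2) : ℂ) ^ 2 + (Real.sin (θ / 2) : ℂ) ^ 2 = 1 := by
    exact_mod_cast Real.cos_sq_add_sin_sq (θ / 2)
  refine inv_eq_of_mul_eq_one_right ?_
  rw [one_sub_exp_mul_I, exp_mul_I, ← ofReal_cos, ← ofReal_sin]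
  field_simp
  linear_combination hcs - ((Real.cos (θ / 2) : ℂ) ^ 2 + (Real.sin (θ / 2) : ℂ) ^ 2
    + I * Real.sin (θ / 2) * Real.cos (θ / 2)) * I_sq

theorem exp_I_mul_sub_exp_I_mul (p q : ℝ) :
    exp (I * p) - exp (I * q) = exp (I * p) * (1 - exp (↑(q - p) * I)) := by
  rw [mul_sub, mul_one, ← exp_add]
  congr 2
  push_cast
  ring

theorem exp_I_mul_div_exp_I_mul_sub_exp_I_mul (M : ℂ) (p q : ℝ) :
    exp (I * M * q) / (exp (I * p) - exp (I * q))
      = exp (I * (M - 1) * p) * (exp (M * ↑(q - p) * I) / (1 - exp (↑(q - p) * I))) := by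
  have hnum :
      exp (I * M * q) = exp (I * p) * (exp (I * (M - 1) * p) * exp (M * ↑(q - p) * I)) := by
    rw [← exp_add, ← exp_add]
    congr 1
    push_cast
    ring
  rw [hnum, exp_I_mul_sub_exp_I_mul, mul_div_mul_left _ _ (exp_ne_zero _), mul_div_assoc]

end Complex

theorem geom_sum_succ_add_inv_one_sub {K : Type*} [Field K] {x w : K} (hxw : x * w = 1)
    (hw : w ≠ 1) (N : ℕ) :
    ∑ k ∈ Finset.range N, x ^ (k + 1) + (1 - w)⁻¹ = x ^ N / (1 - w) := by
  have h1w : 1 - w ≠ 0 := sub_ne_zero.2 hw.symm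
  rw [eq_div_iff h1w, add_mul, inv_mul_cancel₀ h1w, Finset.sum_mul]
  have hterm : ∀ k, x ^ (k + 1) * (1 - w) = x ^ (k + 1) - x ^ k := fun k ↦ by
    linear_combination (-x ^ k) * hxw
  simp only [hterm, Finset.sum_range_sub (x ^ ·), pow_zero, sub_add_cancel]

open Complex

/-- `Real.log` is `log |·|`, so this is a primitive on both sides of every zero of
`sin (θ / 2)`. -/
noncomputable def kernelPrimitive (N : ℕ) (θ : ℝ) : ℂ :=
  θ / 2 + I * Real.log (Real.sin (θ / 2)) +
    ∑ k ∈ Finset.range N, I / (k + 1) * exp (-θ * I) ^ (k + 1)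

theorem hasDerivAt_kernelPrimitive (N : ℕ) {θ : ℝ} (hθ : Real.sin (θ / 2) ≠ 0) :
    HasDerivAt (kernelPrimitive N) (exp (-N * θ * I) / (1 - exp (θ * I))) θ := by
  have hlin : HasDerivAt (fun t : ℝ ↦ (t : ℂ) / 2) (1 / 2) θ := by
    simpa using (ofRealCLM.hasDerivAt (x := θ)).div_const 2
  have hlog : HasDerivAt (fun t : ℝ ↦ I * Real.log (Real.sin (t / 2)))
      (I * (Real.cos (θ / 2) / (2 * Real.sin (θ / 2)))) θ := by
    have hsin : HasDerivAt (fun t : ℝ ↦ Real.sin (t / 2)) (Real.cos (θ / 2) * (1 / 2)) θ :=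
      ((hasDerivAt_id' θ).div_const 2).sin
    refine ((hsin.log hθ).ofReal_comp.const_mul I).congr_deriv ?_
    push_cast; ring
  have hexp : HasDerivAt (fun t : ℝ ↦ exp (-t * I)) (exp (-θ * I) * (-I)) θ := by
    simpa using ((hasDerivAt_id (θ : ℂ)).neg.mul_const I).cexp.comp_ofReal
  have hsum : HasDerivAt
      (fun t : ℝ ↦ ∑ k ∈ Finset.range N, I / (k + 1) * exp (-t * I) ^ (k + 1))
      (∑ k ∈ Finset.range N, exp (-θ * I) ^ (k + 1)) θ := by
    refine HasDerivAt.fun_sum fun k _ ↦ ?_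
    refine ((hexp.pow (k + 1)).const_mul (I / (k + 1))).congr_deriv ?_
    have hk : (k + 1 : ℂ) ≠ 0 := Nat.cast_add_one_ne_zero k
    generalize exp (-θ * I) = x
    rw [Nat.add_sub_cancel]
    push_cast
    field_simp
    linear_combination (-x ^ (k + 1)) * I_sq
  have hxw : exp (-θ * I) * exp (θ * I) = 1 := by
    rw [← Complex.exp_add, neg_mul, neg_add_cancel, Complex.exp_zero]
  have hw : exp (θ * I) ≠ 1 := fun h ↦ one_sub_exp_mul_I_ne_zero hθ (by rw [h, sub_self])
  have hpow : exp (-N * θ * I) = exp (-θ * I) ^ N := by rw [← Complex.exp_nat_mul]; ring_nf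
  refine ((hlin.add hlog).add hsum).congr_deriv ?_
  rw [hpow, ← geom_sum_succ_add_inv_one_sub hxw hw N, inv_one_sub_exp_mul_I hθ]
  ring

theorem kernelPrimitive_add_two_pi (N : ℕ) (θ : ℝ) :
    kernelPrimitive N (θ + 2 * π) = kernelPrimitive N θ + π := by
  have hlog : Real.log (Real.sin ((θ + 2 * π) / 2)) = Real.log (Real.sin (θ / 2)) := by
    rw [add_div, mul_div_cancel_left₀ π two_ne_zero, Real.sin_add_pi, Real.log_neg_eq_log]
  have hexp : exp (-↑(θ + 2 * π) * I) = exp (-θ * I) := by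
    rw [show -↑(θ + 2 * π) * I = -θ * I - 2 * π * I by push_cast; ring, Complex.exp_sub,
      Complex.exp_two_pi_mul_I, div_one]
  simp only [kernelPrimitive, hlog, hexp]
  push_cast
  ring

theorem tendsto_kernelPrimitive_neg_sub_self (N : ℕ) :
    Tendsto (fun ε ↦ kernelPrimitive N (-ε) - kernelPrimitive N ε) (𝓝 0) (𝓝 0) := by
  set g : ℝ → ℂ :=
    fun θ ↦ θ / 2 + ∑ k ∈ Finset.range N, I / (k + 1) * exp (-θ * I) ^ (k + 1)
  have hg : Continuous g := by fun_prop
  have hsub : ∀ ε, kernelPrimitive N (-ε) - kernelPrimitive N ε = g (-ε) - g ε :=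
    fun ε ↦ by
      simp only [kernelPrimitive, g, neg_div, Real.sin_neg, Real.log_neg_eq_log]
      ring
  simp only [hsub]
  exact ((hg.comp continuous_neg).sub hg).tendsto' 0 0 (by simp)

theorem sin_half_sub_ne_zero {p q : ℝ} (hp : p ∈ Ioo 0 (2 * π))
    (hq : q ∈ Icc 0 (2 * π) \ {p}) : Real.sin ((q - p) / 2) ≠ 0 := by
  obtain ⟨⟨hq0, hq2π⟩, hqp⟩ := hq
  rw [Ne, Real.sin_eq_zero_iff_of_lt_of_lt (by linarith [hp.2]) (by linarith [hp.1])]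
  exact fun h ↦ hqp (show q = p by linarith)

/-- For integer M < 1 and p ∈ (0, 2π), the principal value integral
∫₀^{2π} e^{iMq}/(e^{ip} − e^{iq}) dq equals +π e^{i(M−1)p}. -/
theorem pv_integral_neg_M (M : ℤ) (hM : M < 1) (p : ℝ) (hp : p ∈ Set.Ioo 0 (2 * π)) :
    Tendsto (fun ε : ℝ =>
        (∫ q in (0:ℝ)..(p - ε),
          Complex.exp (Complex.I * M * q) /
            (Complex.exp (Complex.I * p) - Complex.exp (Complex.I * q))) +
        ∫ q in (p + ε)..(2 * π),
          Complex.exp (Complex.I * M * q) /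
            (Complex.exp (Complex.I * p) - Complex.exp (Complex.I * q)))
      (nhdsWithin 0 (Set.Ioi 0))
      (nhds ((π : ℂ) * Complex.exp (Complex.I * (M - 1) * p))) := by
  obtain ⟨N, rfl⟩ : ∃ N : ℕ, M = -N := ⟨(-M).toNat, by omega⟩
  push_cast
  set c := exp (I * (-N - 1) * p)
  have hderiv : ∀ q ∈ Icc 0 (2 * π) \ {p}, HasDerivAt (fun t ↦ c * kernelPrimitive N (t - p))
      (exp (I * (-N : ℂ) * q) / (exp (I * p) - exp (I * q))) q := fun q hq ↦ by
    rw [exp_I_mul_div_exp_I_mul_sub_exp_I_mul]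
    refine HasDerivAt.const_mul c ?_
    exact (hasDerivAt_kernelPrimitive N (sin_half_sub_ne_zero hp hq)).comp_sub_const q p
  have hcont : ContinuousOn (fun q : ℝ ↦ exp (I * (-N : ℂ) * q) / (exp (I * p) - exp (I * q)))
      (Icc 0 (2 * π) \ {p}) := by
    refine ContinuousOn.div (by fun_prop) (by fun_prop) fun q hq ↦ ?_
    rw [exp_I_mul_sub_exp_I_mul]
    exact mul_ne_zero (exp_ne_zero _) (one_sub_exp_mul_I_ne_zero (sin_half_sub_ne_zero hp hq))
  have hsym : Tendsto
      (fun ε ↦ c * kernelPrimitive N (p - ε - p) - c * kernelPrimitive N (p + ε - p))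
      (𝓝[>] 0) (𝓝 0) := by
    simpa [← mul_sub] using
      ((tendsto_kernelPrimitive_neg_sub_self N).const_mul c).mono_left nhdsWithin_le_nhds
  have hends : c * kernelPrimitive N (2 * π - p) - c * kernelPrimitive N (0 - p) = π * c := by
    rw [← mul_sub, show 2 * π - p = 0 - p + 2 * π by ring, kernelPrimitive_add_two_pi]
    ring
  rw [← hends]
  exact tendsto_integral_add_integral_of_hasDerivAt hp.1 hp.2 hderiv hcont hsym
end

section
/- For every integer k ≥ 1 and real c in (1, ∞), if c ≤ 3 then for all integers k ≥ 3 one has (2kc/(c+1)² − 1)² ≥ ((c−1)/(c+1))^{2k}; i.e., all of Love's modes are neutrally stable or stable when the aspect ratio does not exceed 3. -/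
/-! For `1/3 ≤ c ≤ 3` the ratio `(c - 1)/(c + 1)` has modulus at most `1/2`, so for `k ≥ 3` the
left side is at most `(1/2)^6 = 1/64`. Since `c/(c + 1)²` decreases on `c ≥ 1`, the base on the
right is at least its value `6·3/16 - 1 = 1/8` at `k = 3`, `c = 3`; both bounds are attained there. -/

lemma abs_sub_one_div_add_one_le_half {c : ℝ} (hc : 1 / 3 ≤ c) (hc3 : c ≤ 3) :
    |(c - 1) / (c + 1)| ≤ 1 / 2 := by
  have hpos : 0 < c + 1 := by linarith
  rw [abs_div, abs_of_pos hpos, div_le_iff₀ hpos, abs_le]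
  constructor <;> linarith

lemma one_eighth_le_two_mul_div_add_one_sq_sub_one {c k : ℝ} (hc : 1 / 3 ≤ c) (hc3 : c ≤ 3)
    (hk : 3 ≤ k) : 1 / 8 ≤ 2 * k * c / (c + 1) ^ 2 - 1 := by
  rw [le_sub_iff_add_le, le_div_iff₀ (by positivity)]
  -- `9(c + 1)² ≤ 48c` is `(3c - 1)(3 - c) ≥ 0`
  nlinarith [mul_nonneg (by linarith : 0 ≤ 3 * c - 1) (by linarith : 0 ≤ 3 - c),
    mul_nonneg (by linarith : 0 ≤ k - 3) (by linarith : 0 ≤ c)]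

/-- If the aspect ratio c of the elliptic vortex satisfies 1 < c ≤ 3, then for
every integer k ≥ 3 one has (2kc/(c+1)² − 1)² ≥ ((c−1)/(c+1))^{2k}, i.e. all of
Love's modes are stable or neutrally stable. -/
theorem love_stable_below_three (c : ℝ) (hc : 1 < c) (hc3 : c ≤ 3) (k : ℕ) (hk : 3 ≤ k) :
    ((c - 1) / (c + 1)) ^ (2 * k) ≤ (2 * k * c / (c + 1) ^ 2 - 1) ^ 2 := by
  have hc' : 1 / 3 ≤ c := by linarith
  have hk' : (3 : ℝ) ≤ k := by exact_mod_cast hk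
  calc ((c - 1) / (c + 1)) ^ (2 * k)
      = |(c - 1) / (c + 1)| ^ (2 * k) := (Even.pow_abs ⟨k, two_mul k⟩ _).symm
    _ ≤ (1 / 2) ^ (2 * k) :=
        pow_le_pow_left₀ (abs_nonneg _) (abs_sub_one_div_add_one_le_half hc' hc3) _
    _ ≤ (1 / 2) ^ 6 := pow_le_pow_of_le_one (by norm_num) (by norm_num) (by omega)
    _ = (1 / 8) ^ 2 := by norm_num
    _ ≤ (2 * k * c / (c + 1) ^ 2 - 1) ^ 2 :=
        pow_le_pow_left₀ (by norm_num) (one_eighth_le_two_mul_div_add_one_sq_sub_one hc' hc3 hk') _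
end

section
/- For every integer k ≥ 3, the function c ↦ ((c−1)/(c+1))^{2k} − (2kc/(c+1)² − 1)² is strictly positive for all sufficiently large c; i.e., every mode k ≥ 3 of the elliptic vortex becomes unstable for large enough aspect ratio. Specifically, as c → ∞, ((c−1)/(c+1))^{2k} → 1 while (2kc/(c+1)² − 1)² → 1, and there exists c_k > 1 such that for c in a nonempty open interval beyond c_k the expression is positive. -/
open Filter

/-! With `x = 2 / (c + 1)` the expression is `(1 - x) ^ (2k) - (k x - k x² / 2 - 1) ^ 2`, a
difference of squares. Truncating `(1 - x) ^ k` after its cubic term shows that the sum of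
the two bases is at least `k (k - 2) x² (3 - (k - 1) x) / 6`, positive for `k ≥ 3` and small
`x`, while their difference is positive as soon as `k x ≤ 1`. -/

theorem one_sub_pow_ge_of_le_one (n : ℕ) {x : ℝ} (hx : x ≤ 1) :
    1 - n * x + n.choose 2 * x ^ 2 - n.choose 3 * x ^ 3 ≤ (1 - x) ^ n := by
  induction n with
  | zero => simp
  | succ n ih =>
    -- Pascal's rule gives `(1 - x) * T n = T (n + 1) + C(n, 3) x⁴` for the truncations `T`.
    have hstep : (1 - x) * (1 - n * x + n.choose 2 * x ^ 2 - n.choose 3 * x ^ 3) =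
        1 - (n + 1 : ℕ) * x + (n + 1).choose 2 * x ^ 2 - (n + 1).choose 3 * x ^ 3 +
          n.choose 3 * x ^ 4 := by
      simp only [Nat.choose_succ_succ' n 1, Nat.choose_succ_succ' n 2, Nat.choose_one_right]
      push_cast
      ring
    calc _ ≤ (1 - x) * (1 - n * x + n.choose 2 * x ^ 2 - n.choose 3 * x ^ 3) := by
          rw [hstep]; exact le_add_of_nonneg_right (by positivity)
      _ ≤ (1 - x) * (1 - x) ^ n := by gcongr
      _ = (1 - x) ^ (n + 1) := (pow_succ' _ _).symm

theorem cast_choose_three (K : Type*) [Field K] [CharZero K] (k : ℕ) :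
    (k.choose 3 : K) = k * (k - 1) * (k - 2) / 6 := by
  rcases k with _ | _ | k
  · simp
  · simp [Nat.choose]
  · have h : ((k + 2).choose 3 : K) * 3 = ((k + 2).choose 2 : K) * k := by
      exact_mod_cast Nat.choose_succ_right_eq (k + 2) 2
    rw [Nat.cast_choose_two] at h
    rw [eq_div_iff (by norm_num)]
    push_cast at h ⊢
    linear_combination 2 * h

theorem sq_lt_sq_one_sub_pow (k : ℕ) (hk : 3 ≤ k) {x : ℝ} (hx₀ : 0 < x) (hkx : k * x ≤ 1) :
    (k * x - k / 2 * x ^ 2 - 1) ^ 2 < ((1 - x) ^ k) ^ 2 := by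
  have hk' : (3 : ℝ) ≤ k := by exact_mod_cast hk
  have hx₁ : x ≤ 1 := by nlinarith
  have hbound := one_sub_pow_ge_of_le_one k hx₁
  rw [Nat.cast_choose_two, cast_choose_three] at hbound
  apply sq_lt_sq'
  · -- the truncation in `hbound` exceeds `-(k x - k/2 x² - 1)` by exactly this gap
    have hgap : 0 < k * (k - 2) / 6 * x ^ 2 * (3 - (k - 1) * x) := by
      have : 0 < 3 - (k - 1) * x := by nlinarith
      have : (0 : ℝ) < k - 2 := by linarith
      positivity
    linarith
  · have : 0 ≤ (1 - x) ^ k := pow_nonneg (by linarith) k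
    nlinarith [sq_nonneg x]

/-- Every mode k ≥ 3 of the elliptic vortex becomes unstable for large enough
aspect ratio: ((c−1)/(c+1))^{2k} − (2kc/(c+1)² − 1)² is strictly positive for
all sufficiently large c; in particular some c > 1 makes it positive. -/
theorem love_modes_unstable_large_aspect (k : ℕ) (hk : 3 ≤ k) :
    (∀ᶠ c : ℝ in atTop,
      0 < ((c - 1) / (c + 1)) ^ (2 * k) - (2 * k * c / (c + 1) ^ 2 - 1) ^ 2) ∧
    ∃ c : ℝ, 1 < c ∧
      0 < ((c - 1) / (c + 1)) ^ (2 * k) - (2 * k * c / (c + 1) ^ 2 - 1) ^ 2 := by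
  have hlarge : ∀ᶠ c : ℝ in atTop,
      0 < ((c - 1) / (c + 1)) ^ (2 * k) - (2 * k * c / (c + 1) ^ 2 - 1) ^ 2 := by
    filter_upwards [eventually_ge_atTop (2 * k : ℝ)] with c hc
    have hc₁ : 0 < c + 1 := by linarith [(k.cast_nonneg : (0 : ℝ) ≤ k)]
    have hratio : (c - 1) / (c + 1) = 1 - 2 / (c + 1) := by field_simp; ring
    have hshear : 2 * k * c / (c + 1) ^ 2 - 1 =
        k * (2 / (c + 1)) - k / 2 * (2 / (c + 1)) ^ 2 - 1 := by
      field_simp; ring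
    have hkx : k * (2 / (c + 1)) ≤ 1 := by rw [mul_div_assoc', div_le_one hc₁]; linarith
    rw [sub_pos, pow_mul', hratio, hshear]
    exact sq_lt_sq_one_sub_pow k hk (by positivity) hkx
  obtain ⟨c, hc, hc₁⟩ := (hlarge.and (eventually_gt_atTop 1)).exists
  exact ⟨hlarge, c, hc₁, hc⟩
end
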